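/- Let A=(C,m) be a 3-dimensional toric idealistic cluster, let Q_t be a node and let c ∈ {1,2,3} be a label that does not belong to S_t (the set of labels under Q_t). Let Q_t, Q_{t+1}, …, Q_l be nodes of C such that Q_{s+1} is the child of Q_s along the edge labelled c for all t ≤ s ≤ l−1, and suppose m_t = m_{t+1} = ⋯ = m_l. Then for every t ≤ i ≤ l one has ν_i = (i−t+1)·ν_t − (i−t) and N_i = (i−t+1)·N_t. Consequently: (1) every positive integer b dividing N_t divides N_i for all t ≤ i ≤ l; and (2) if l > t and ν_l/N_l = c'/d' with c', d' coprime positive integers, then d' does not divide N_t. -/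

import Mathlib

open Finset

/-!
Common framework: 3-dimensional toric constellations and toric idealistic clusters.
The edge labels `1, 2, 3` of the paper are encoded as `0, 1, 2 : Fin 3`.
-/

/-- A 3-dimensional toric constellation: a finite rooted tree on nodes `0, …, r−1`
(node `0` the root, every child having larger index than its parent), each node having
at most three children, the edges from a node to its children carrying pairwise
distinct labels in `Fin 3`.  `label j` is the label of the edge from `parent j` to `j`
(irrelevant for the root). -/
structure ToricConstellation (r : ℕ) where
  parent : Fin r → Fin r
  label : Fin r → Fin 3
  parent_lt : ∀ i : Fin r, 0 < (i : ℕ) → (parent i : ℕ) < (i : ℕ)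
  parent_root : ∀ i : Fin r, (i : ℕ) = 0 → parent i = i
  label_distinct : ∀ i j : Fin r, 0 < (i : ℕ) → 0 < (j : ℕ) → i ≠ j →
    parent i = parent j → label i ≠ label j

namespace ToricConstellation

variable {r : ℕ}

/-- The ordered triple of vectors of `ℤ³` attached to a node: the root carries the
standard basis, and the child along the edge labelled `a` of a node with cone
`(u₁,u₂,u₃)` carries the triple obtained by replacing `u_a` with `u₁+u₂+u₃`. -/
def cone (C : ToricConstellation r) (i : Fin r) : Fin 3 → (Fin 3 → ℤ) :=
  if h : 0 < (i : ℕ) then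
    Function.update (cone C (C.parent i)) (C.label i) (∑ a, cone C (C.parent i) a)
  else fun a => Pi.single a 1
termination_by (i : ℕ)
decreasing_by all_goals exact C.parent_lt i h

/-- `v(Q) = u₁ + u₂ + u₃`, the sum of the cone vectors of a node. -/
def v (C : ToricConstellation r) (i : Fin r) : Fin 3 → ℤ := ∑ a, cone C i a

/-- `Prox C j i` means `j → i`, i.e. `Q_j` is proximate to `Q_i`:
`j ≠ i` and `v(Q_i)` is an entry of `cone(Q_j)`. -/
def Prox (C : ToricConstellation r) (j i : Fin r) : Prop :=
  j ≠ i ∧ ∃ a : Fin 3, cone C j a = v C i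

instance (C : ToricConstellation r) (j i : Fin r) : Decidable (C.Prox j i) := by
  unfold Prox; infer_instance

/-- `inChain C i a b j = true` iff `j = Q_i(a, b^t)` for some `t ≥ 0`, i.e. `j` is
reached from `i` by one edge labelled `a` followed by `t` edges labelled `b`. -/
def inChain (C : ToricConstellation r) (i : Fin r) (a b : Fin 3) (j : Fin r) : Bool :=
  if h : 0 < (j : ℕ) then
    (decide (C.parent j = i) && decide (C.label j = a)) ||
      (decide (C.label j = b) && inChain C i a b (C.parent j))
  else false
termination_by (j : ℕ)
decreasing_by exact C.parent_lt j h

/-- `LinProx C j i` means `j ↠ i`, i.e. `Q_j` is linearly proximate to `Q_i`. -/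
def LinProx (C : ToricConstellation r) (j i : Fin r) : Prop :=
  ∃ a b : Fin 3, a ≠ b ∧ inChain C i a b j = true

instance (C : ToricConstellation r) (j i : Fin r) : Decidable (C.LinProx j i) := by
  unfold LinProx; infer_instance

/-- `j` is a child of `i`. -/
def IsChild (C : ToricConstellation r) (j i : Fin r) : Prop :=
  0 < (j : ℕ) ∧ C.parent j = i

instance (C : ToricConstellation r) (j i : Fin r) : Decidable (C.IsChild j i) := by
  unfold IsChild; infer_instance

/-- The set `S_i` of labels of the edges on the path from the root to `Q_i`. -/
def labelsUnder (C : ToricConstellation r) (i : Fin r) : Finset (Fin 3) :=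
  if h : 0 < (i : ℕ) then insert (C.label i) (labelsUnder C (C.parent i)) else ∅
termination_by (i : ℕ)
decreasing_by exact C.parent_lt i h

/-- `i` is a weak ancestor of `j` (`i = j` or `i` a strict ancestor of `j`). -/
def anc (C : ToricConstellation r) (i j : Fin r) : Bool :=
  decide (i = j) || (if h : 0 < (j : ℕ) then anc C i (C.parent j) else false)
termination_by (j : ℕ)
decreasing_by exact C.parent_lt j h

/-- The set of nodes weakly above `i` (`i` together with its descendants). -/
def weakAbove (C : ToricConstellation r) (i : Fin r) : Finset (Fin r) :=
  univ.filter (fun j => anc C i j = true)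

end ToricConstellation

/-- A 3-dimensional toric cluster: a toric constellation together with a positive
integer weight for each node. -/
structure ToricCluster (r : ℕ) extends ToricConstellation r where
  m : Fin r → ℤ
  m_pos : ∀ j, 0 < m j

namespace ToricCluster

open ToricConstellation

variable {r : ℕ}

/-- `M_{Q_i}(a,b) := Σ_{t ≥ 0, Q_i(a,b^t) ∈ C} m_{Q_i(a,b^t)}`. -/
def M (A : ToricCluster r) (i : Fin r) (a b : Fin 3) : ℤ :=
  ∑ j ∈ univ.filter (fun j => inChain A.toToricConstellation i a b j = true), A.m j

/-- The cluster is idealistic: the linear proximity inequalities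
`M_{Q_i}(a,b) + M_{Q_i}(b,a) ≤ m_{Q_i}` hold. -/
def Idealistic (A : ToricCluster r) : Prop :=
  ∀ i : Fin r, ∀ a b : Fin 3, a ≠ b → A.M i a b + A.M i b a ≤ A.m i

/-- The set of nodes `j` proximate to `i` (`j → i`). -/
def proxSet (A : ToricCluster r) (i : Fin r) : Finset (Fin r) :=
  univ.filter (fun j => Prox A.toToricConstellation j i)

/-- `B_i`: the set of nodes to which `i` is proximate. -/
def Bset (A : ToricCluster r) (i : Fin r) : Finset (Fin r) :=
  univ.filter (fun j => Prox A.toToricConstellation i j)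

/-- `A_i`: the children `k` of `i` for which there is no `l` with `i → l` and `k → l`. -/
def Aset (A : ToricCluster r) (i : Fin r) : Finset (Fin r) :=
  univ.filter (fun k => IsChild A.toToricConstellation k i ∧
    ¬ ∃ l, Prox A.toToricConstellation i l ∧ Prox A.toToricConstellation k l)

/-- The Euler characteristic `χ_i = χ(E_i°)`. -/
def chi (A : ToricCluster r) (i : Fin r) : ℤ :=
  3 + A.m i * (A.m i - 3)
    - ∑ j ∈ A.proxSet i, A.m j * (A.m j - 1)
    + ∑ j ∈ A.proxSet i,
        (A.m j - ∑ k ∈ (A.proxSet i).filter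
          (fun k => LinProx A.toToricConstellation k j), A.m k)
    + ∑ j ∈ A.Bset i,
        (A.m i - ∑ k ∈ (A.proxSet j).filter
          (fun k => LinProx A.toToricConstellation k i), A.m k)
    - ((A.Aset i).card : ℤ) - 2 * ((A.Bset i).card : ℤ)
    + (((A.Bset i).card.choose 2 : ℕ) : ℤ)

/-- `D_i = m_i² − Σ_{j→i} m_j²`. -/
def D (A : ToricCluster r) (i : Fin r) : ℤ :=
  A.m i ^ 2 - ∑ j ∈ A.proxSet i, A.m j ^ 2

/-- `r_{ab} = m_i − M_{Q_i}(a,b) − M_{Q_i}(b,a)`. -/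
def rab (A : ToricCluster r) (i : Fin r) (a b : Fin 3) : ℤ :=
  A.m i - A.M i a b - A.M i b a

/-- `R_i = r̂_{12} + r̂_{13} + r̂_{23}`, where `r̂_{ab} = r_{ab}` if the remaining third
label does not appear under `Q_i`, and `r̂_{ab} = 0` otherwise.  (Labels `1,2,3` are
encoded as `0,1,2 : Fin 3`.) -/
def R (A : ToricCluster r) (i : Fin r) : ℤ :=
  (if (2 : Fin 3) ∉ labelsUnder A.toToricConstellation i then A.rab i 0 1 else 0)
  + (if (1 : Fin 3) ∉ labelsUnder A.toToricConstellation i then A.rab i 0 2 else 0)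
  + (if (0 : Fin 3) ∉ labelsUnder A.toToricConstellation i then A.rab i 1 2 else 0)

/-- `T_i = 3 − #A_i − 2·#B_i + (#B_i choose 2)`. -/
def T (A : ToricCluster r) (i : Fin r) : ℤ :=
  3 - ((A.Aset i).card : ℤ) - 2 * ((A.Bset i).card : ℤ)
    + (((A.Bset i).card.choose 2 : ℕ) : ℤ)

/-- The nodes to which `i` is proximate, of smaller index: the sums in the recursive
definitions of the numerical data range over the nodes to which `i` is proximate,
which are ancestors of `i` and hence have smaller index (making the recursion
well-founded). -/
def anteSet (A : ToricCluster r) (i : Fin r) : Finset (Fin r) :=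
  univ.filter (fun j => (j : ℕ) < (i : ℕ) ∧ Prox A.toToricConstellation i j)

/-- The numerical datum `N_i := m_i + Σ_{j : i→j} N_j`. -/
def N (A : ToricCluster r) (i : Fin r) : ℤ :=
  A.m i + ∑ j ∈ (A.anteSet i).attach, N A j.1
termination_by (i : ℕ)
decreasing_by
  have hj := j.2
  simp only [anteSet, Finset.mem_filter] at hj
  exact hj.2.1

/-- The numerical datum `ν_i := 3 + Σ_{j : i→j} (ν_j − 1)`. -/
def nu (A : ToricCluster r) (i : Fin r) : ℤ :=
  3 + ∑ j ∈ (A.anteSet i).attach, (nu A j.1 - 1)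
termination_by (i : ℕ)
decreasing_by
  have hj := j.2
  simp only [anteSet, Finset.mem_filter] at hj
  exact hj.2.1

end ToricCluster


open ToricConstellation ToricCluster

/-! The cones of a constellation are the cones of an iterated stellar subdivision of the
positive octant, so their open interiors are nested along ancestry and disjoint otherwise.
Since `v(Q)` lies in the open interior of `cone(Q)` and `v(Q)` is an edge of the cones of
the descendants of `Q` (never in their interior), `Q ↦ v(Q)` is injective. Along a chain
`Q_t, …, Q_l` of `c`-children with `c ∉ S_t`, the cone of `Q_{s+1}` is that of `Q_t` with
its `c`-th entry `e_c` replaced by `v(Q_s)`; by injectivity, `Q_{s+1}` is proximate exactly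
to `Q_s` and to the nodes `Q_t` is proximate to. Hence `N_{s+1} = N_s + N_t` and
`ν_{s+1} = ν_s + ν_t - 1`, which gives the closed formulas, and `(i-t+1) ∣ (i-t)` would be
forced if `d' ∣ N_t`. -/

/-- Coordinates in a basis `u` of a vector whose coordinates in `Function.update u c (∑ b, u b)`
are `l`. -/
def parentCoords {ι R : Type*} [DecidableEq ι] [Add R] (c : ι) (l : ι → R) : ι → R :=
  fun a => if a = c then l c else l c + l a

section parentCoords

variable {ι R : Type*} [DecidableEq ι]

lemma parentCoords_self [Add R] (c : ι) (l : ι → R) : parentCoords c l c = l c :=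
  if_pos rfl

lemma parentCoords_of_ne [Add R] {a c : ι} (l : ι → R) (h : a ≠ c) :
    parentCoords c l a = l c + l a :=
  if_neg h

lemma parentCoords_pos [AddZeroClass R] [Preorder R] [AddLeftStrictMono R] {l : ι → R}
    (hl : ∀ a, 0 < l a) (c a : ι) : 0 < parentCoords c l a := by
  rcases eq_or_ne a c with rfl | h
  · rw [parentCoords_self]; exact hl a
  · rw [parentCoords_of_ne l h]; exact add_pos (hl c) (hl a)

lemma parentCoords_self_lt [AddZeroClass R] [Preorder R] [AddLeftStrictMono R] {l : ι → R}
    (hl : ∀ a, 0 < l a) {a c : ι} (h : a ≠ c) : parentCoords c l c < parentCoords c l a := by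
  rw [parentCoords_self, parentCoords_of_ne l h]
  exact lt_add_of_pos_right _ (hl a)

lemma sum_smul_update_sum [Fintype ι] [Semiring R] {M : Type*} [AddCommMonoid M] [Module R M]
    (u : ι → M) (c : ι) (l : ι → R) :
    ∑ a, l a • Function.update u c (∑ b, u b) a = ∑ a, parentCoords c l a • u a := by
  have hL : ∑ a ∈ {c}ᶜ, l a • Function.update u c (∑ b, u b) a = ∑ a ∈ {c}ᶜ, l a • u a :=
    sum_congr rfl fun a ha => by rw [Function.update_of_ne (by simpa using ha)]
  have hR : ∑ a ∈ {c}ᶜ, parentCoords c l a • u a = ∑ a ∈ {c}ᶜ, (l c • u a + l a • u a) :=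
    sum_congr rfl fun a ha => by rw [parentCoords_of_ne l (by simpa using ha), add_smul]
  rw [Fintype.sum_eq_add_sum_compl c, Fintype.sum_eq_add_sum_compl c (fun a => _ • u a), hL, hR,
    Function.update_self, Fintype.sum_eq_add_sum_compl c u, parentCoords_self, sum_add_distrib,
    smul_add, smul_sum, add_assoc]

end parentCoords

namespace ToricConstellation

variable {r : ℕ} (C : ToricConstellation r)

lemma cone_of_not_pos {i : Fin r} (h : ¬ 0 < (i : ℕ)) : C.cone i = fun a => Pi.single a 1 := by
  rw [cone, dif_neg h]

lemma cone_of_pos {i : Fin r} (h : 0 < (i : ℕ)) :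
    C.cone i = Function.update (C.cone (C.parent i)) (C.label i) (C.v (C.parent i)) := by
  rw [cone, dif_pos h]; rfl

lemma labelsUnder_of_pos {i : Fin r} (h : 0 < (i : ℕ)) :
    C.labelsUnder i = insert (C.label i) (C.labelsUnder (C.parent i)) := by
  rw [labelsUnder, dif_pos h]

lemma sum_smul_cone_of_pos {i : Fin r} (h : 0 < (i : ℕ)) (l : Fin 3 → ℤ) :
    ∑ a, l a • C.cone i a = ∑ a, parentCoords (C.label i) l a • C.cone (C.parent i) a := by
  rw [cone_of_pos C h]
  exact sum_smul_update_sum _ _ _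

lemma linearIndependent_cone (i : Fin r) : LinearIndependent ℤ (C.cone i) := by
  induction i using WellFoundedLT.induction with
  | _ i IH =>
  by_cases h : 0 < (i : ℕ)
  · refine Fintype.linearIndependent_iff.2 fun g hg a => ?_
    rw [sum_smul_cone_of_pos C h] at hg
    have hzero := Fintype.linearIndependent_iff.1 (IH _ (C.parent_lt i h)) _ hg
    have hc := hzero (C.label i)
    rw [parentCoords_self] at hc
    rcases eq_or_ne a (C.label i) with rfl | hne
    · exact hc
    · simpa [parentCoords_of_ne g hne, hc] using hzero a
  · rw [cone_of_not_pos C h]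
    exact Pi.linearIndependent_single_one _ _

def InOpenCone (i : Fin r) (x : Fin 3 → ℤ) : Prop :=
  ∃ l : Fin 3 → ℤ, (∀ a, 0 < l a) ∧ ∑ a, l a • C.cone i a = x

def IsAncestor : Fin r → Fin r → Prop :=
  Relation.ReflTransGen fun p k => C.IsChild k p

lemma inOpenCone_v (i : Fin r) : C.InOpenCone i (C.v i) :=
  ⟨1, fun _ => one_pos, by simp [v]⟩

variable {C}

lemma InOpenCone.parent {i : Fin r} {x : Fin 3 → ℤ} (h : 0 < (i : ℕ)) (hx : C.InOpenCone i x) :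
    C.InOpenCone (C.parent i) x := by
  obtain ⟨l, hl, rfl⟩ := hx
  exact ⟨_, parentCoords_pos hl _, (sum_smul_cone_of_pos C h l).symm⟩

lemma InOpenCone.of_isAncestor {p k : Fin r} {x : Fin 3 → ℤ} (hpk : C.IsAncestor p k)
    (hx : C.InOpenCone k x) : C.InOpenCone p x := by
  induction hpk using Relation.ReflTransGen.head_induction_on with
  | refl => exact hx
  | head hchild _ ih =>
    obtain ⟨hpos, rfl⟩ := hchild
    exact ih.parent hpos

variable (C)

lemma isAncestor_of_not_pos {p : Fin r} (hp : ¬ 0 < (p : ℕ)) (k : Fin r) : C.IsAncestor p k := by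
  induction k using WellFoundedLT.induction with
  | _ k IH =>
  by_cases hk : 0 < (k : ℕ)
  · exact (IH _ (C.parent_lt k hk)).tail ⟨hk, rfl⟩
  · obtain rfl : p = k := Fin.ext (by omega)
    exact .refl

/-- In the coordinates of the parent, the open cone of the child along `a` is where the `a`-th
coordinate is the strict minimum. -/
lemma eq_of_isChild_of_inOpenCone {p j k : Fin r} {x : Fin 3 → ℤ} (hj : C.IsChild j p)
    (hk : C.IsChild k p) (hxj : C.InOpenCone j x) (hxk : C.InOpenCone k x) : j = k := by
  by_contra hne
  have hlabel := C.label_distinct j k hj.1 hk.1 hne (hj.2.trans hk.2.symm)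
  obtain ⟨l, hl, rfl⟩ := hxj
  obtain ⟨m, hm, hx⟩ := hxk
  rw [sum_smul_cone_of_pos C hj.1, sum_smul_cone_of_pos C hk.1, hj.2, hk.2] at hx
  have hcoords := Fintype.linearIndependent_iffₛ.1 (C.linearIndependent_cone p) _ _ hx
  have h1 := parentCoords_self_lt hl hlabel.symm
  have h2 := parentCoords_self_lt hm hlabel
  rw [hcoords, hcoords] at h2
  exact lt_asymm h1 h2

lemma isAncestor_or_isAncestor_of_inOpenCone {i j : Fin r} {x : Fin 3 → ℤ}
    (hi : C.InOpenCone i x) (hj : C.InOpenCone j x) : C.IsAncestor i j ∨ C.IsAncestor j i := by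
  induction j using WellFoundedLT.induction with
  | _ j IH =>
  by_cases hj0 : 0 < (j : ℕ)
  · rcases IH _ (C.parent_lt j hj0) (hj.parent hj0) with hip | hpi
    · exact .inl (hip.tail ⟨hj0, rfl⟩)
    · rcases hpi.cases_head with hpi | ⟨k, hk, hki⟩
      · exact .inl (hpi ▸ .single ⟨hj0, rfl⟩)
      · obtain rfl := C.eq_of_isChild_of_inOpenCone hk ⟨hj0, rfl⟩ (hi.of_isAncestor hki) hj
        exact .inr hki
  · exact .inr (C.isAncestor_of_not_pos hj0 i)

lemma v_pos (i : Fin r) (b : Fin 3) : 0 < C.v i b := by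
  have hroot : ¬ 0 < ((⟨0, i.pos⟩ : Fin r) : ℕ) := lt_irrefl 0
  obtain ⟨l, hl, hv⟩ := (C.inOpenCone_v i).of_isAncestor (C.isAncestor_of_not_pos hroot i)
  rw [cone_of_not_pos C hroot] at hv
  simpa [← hv, Pi.single_apply] using hl b

lemma v_ne_single (i : Fin r) (b : Fin 3) : C.v i ≠ Pi.single b 1 := fun h => by
  obtain ⟨b', hb'⟩ := exists_ne b
  simpa [h, Pi.single_eq_of_ne hb'] using C.v_pos i b'

/-- `v p` is an entry of the cone of each child of `p`, so it is not in that child's open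
cone. -/
lemma eq_of_isAncestor_of_v_eq {p k : Fin r} (hpk : C.IsAncestor p k) (hv : C.v p = C.v k) :
    p = k := by
  rcases hpk.cases_head with hpk | ⟨j, hj, hjk⟩
  · exact hpk
  exfalso
  obtain ⟨l, hl, hx⟩ := (C.inOpenCone_v k).of_isAncestor hjk
  have hvp : ∑ a, (Pi.single (C.label j) 1 : Fin 3 → ℤ) a • C.cone j a = C.v k := by
    rw [← hv, ← hj.2, cone_of_pos C hj.1]
    simp [Pi.single_apply]
  have hcoords :=
    Fintype.linearIndependent_iffₛ.1 (C.linearIndependent_cone j) _ _ (hx.trans hvp.symm)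
  obtain ⟨b, hb⟩ := exists_ne (C.label j)
  exact (hl b).ne' ((hcoords b).trans (Pi.single_eq_of_ne hb _))

theorem v_injective : Function.Injective C.v := fun i j h =>
  (C.isAncestor_or_isAncestor_of_inOpenCone (C.inOpenCone_v i) (h ▸ C.inOpenCone_v j)).elim
    (fun hij => C.eq_of_isAncestor_of_v_eq hij h)
    fun hji => (C.eq_of_isAncestor_of_v_eq hji h.symm).symm

lemma cone_eq_single_or_v (i : Fin r) (a : Fin 3) :
    (∃ b, C.cone i a = Pi.single b 1) ∨ ∃ k < i, C.cone i a = C.v k := by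
  induction i using WellFoundedLT.induction with
  | _ i IH =>
  by_cases h : 0 < (i : ℕ)
  · have hpi : C.parent i < i := C.parent_lt i h
    rw [cone_of_pos C h]
    rcases eq_or_ne a (C.label i) with rfl | hne
    · exact .inr ⟨C.parent i, hpi, Function.update_self ..⟩
    · rw [Function.update_of_ne hne]
      rcases IH _ hpi with hb | ⟨k, hk, hka⟩
      · exact .inl hb
      · exact .inr ⟨k, hk.trans hpi, hka⟩
  · rw [cone_of_not_pos C h]
    exact .inl ⟨a, rfl⟩

lemma cone_of_not_mem_labelsUnder {i : Fin r} {a : Fin 3} (ha : a ∉ C.labelsUnder i) :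
    C.cone i a = Pi.single a 1 := by
  induction i using WellFoundedLT.induction with
  | _ i IH =>
  by_cases h : 0 < (i : ℕ)
  · rw [labelsUnder_of_pos C h, mem_insert, not_or] at ha
    rw [cone_of_pos C h, Function.update_of_ne ha.1]
    exact IH _ (C.parent_lt i h) ha.2
  · rw [cone_of_not_pos C h]

def IsChainAlong (c : Fin 3) (n : ℕ) (q : ℕ → Fin r) : Prop :=
  ∀ s, s < n → C.IsChild (q (s + 1)) (q s) ∧ C.label (q (s + 1)) = c

namespace IsChainAlong

variable {C} {c : Fin 3} {n : ℕ} {q : ℕ → Fin r}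

lemma lt_succ (hq : C.IsChainAlong c n q) {s : ℕ} (hs : s < n) : q s < q (s + 1) := by
  have h := C.parent_lt _ (hq s hs).1.1
  rwa [(hq s hs).1.2] at h

lemma zero_le (hq : C.IsChainAlong c n q) {s : ℕ} (hs : s ≤ n) : q 0 ≤ q s := by
  induction s with
  | zero => exact le_rfl
  | succ s ih => exact (ih (by omega)).trans (hq.lt_succ (by omega)).le

lemma cone_succ (hq : C.IsChainAlong c n q) {s : ℕ} (hs : s < n) :
    C.cone (q (s + 1)) = Function.update (C.cone (q 0)) c (C.v (q s)) := by
  induction s with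
  | zero => rw [cone_of_pos C (hq 0 hs).1.1, (hq 0 hs).1.2, (hq 0 hs).2]
  | succ s ih =>
    rw [cone_of_pos C (hq _ hs).1.1, (hq _ hs).1.2, (hq _ hs).2, ih (by omega),
      Function.update_idem]

end IsChainAlong

end ToricConstellation

namespace ToricCluster

variable {r : ℕ} (A : ToricCluster r)

lemma N_eq (i : Fin r) : A.N i = A.m i + ∑ j ∈ A.anteSet i, A.N j := by
  rw [N, sum_attach]

lemma nu_eq (i : Fin r) : A.nu i = 3 + ∑ j ∈ A.anteSet i, (A.nu j - 1) := by
  rw [nu, sum_attach _ fun j => A.nu j - 1]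

lemma mem_anteSet {i j : Fin r} : j ∈ A.anteSet i ↔ j < i ∧ i ≠ j ∧ ∃ a, A.cone i a = A.v j := by
  simp [anteSet, Prox]

lemma anteSet_eq_insert {p j k : Fin r} {c : Fin 3} (hc : c ∉ A.labelsUnder p) (hpj : p ≤ j)
    (hjk : j < k) (hcone : A.cone k = Function.update (A.cone p) c (A.v j)) :
    A.anteSet k = insert j (A.anteSet p) := by
  ext i
  rw [mem_insert, mem_anteSet, mem_anteSet, hcone]
  constructor
  · rintro ⟨-, -, a, ha⟩
    rcases eq_or_ne a c with rfl | hac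
    · rw [Function.update_self] at ha
      exact .inl (A.v_injective ha).symm
    · rw [Function.update_of_ne hac] at ha
      rcases A.cone_eq_single_or_v p a with ⟨b, hb⟩ | ⟨l, hlp, hl⟩
      · exact absurd (ha.symm.trans hb) (A.v_ne_single i b)
      · obtain rfl := A.v_injective (hl.symm.trans ha)
        exact .inr ⟨hlp, hlp.ne', a, hl⟩
  · rintro (rfl | ⟨hip, -, a, ha⟩)
    · exact ⟨hjk, hjk.ne', c, Function.update_self ..⟩
    · have hac : a ≠ c := by
        rintro rfl
        exact A.v_ne_single i a (ha.symm.trans (A.cone_of_not_mem_labelsUnder hc))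
      have hik : i < k := hip.trans (hpj.trans_lt hjk)
      exact ⟨hik, hik.ne', a, by rwa [Function.update_of_ne hac]⟩

variable {A}

lemma N_eq_add_of_anteSet_eq_insert {p j k : Fin r} (h : A.anteSet k = insert j (A.anteSet p))
    (hj : j ∉ A.anteSet p) (hm : A.m k = A.m p) : A.N k = A.N j + A.N p := by
  rw [N_eq, h, sum_insert hj, N_eq A p, hm]
  ring

lemma nu_eq_add_of_anteSet_eq_insert {p j k : Fin r} (h : A.anteSet k = insert j (A.anteSet p))
    (hj : j ∉ A.anteSet p) : A.nu k = A.nu j + A.nu p - 1 := by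
  rw [nu_eq, h, sum_insert hj, nu_eq A p]
  ring

lemma nu_eq_and_N_eq_of_isChainAlong {n : ℕ} {q : ℕ → Fin r} {c : Fin 3}
    (hc : c ∉ A.labelsUnder (q 0)) (hq : A.IsChainAlong c n q)
    (hm : ∀ s, s ≤ n → A.m (q s) = A.m (q 0)) (i : ℕ) (hi : i ≤ n) :
    A.nu (q i) = ((i : ℤ) + 1) * A.nu (q 0) - (i : ℤ) ∧ A.N (q i) = ((i : ℤ) + 1) * A.N (q 0) := by
  induction i with
  | zero => constructor <;> ring
  | succ s ih =>
    have hs : s < n := by omega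
    have hante := A.anteSet_eq_insert hc (hq.zero_le hs.le) (hq.lt_succ hs) (hq.cone_succ hs)
    have hnotmem : q s ∉ A.anteSet (q 0) := fun hmem =>
      ((A.mem_anteSet.1 hmem).1.trans_le (hq.zero_le hs.le)).false
    obtain ⟨hnu, hN⟩ := ih hs.le
    rw [nu_eq_add_of_anteSet_eq_insert hante hnotmem, hnu,
      N_eq_add_of_anteSet_eq_insert hante hnotmem (hm _ hi), hN]
    push_cast
    constructor <;> ring

end ToricCluster

theorem stmt9_general {r : ℕ} (A : ToricCluster r)
    (n : ℕ) (q : ℕ → Fin r) (c : Fin 3)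
    (hc : c ∉ labelsUnder A.toToricConstellation (q 0))
    (hchain : ∀ s, s < n →
      IsChild A.toToricConstellation (q (s + 1)) (q s)
      ∧ A.toToricConstellation.label (q (s + 1)) = c)
    (hm : ∀ s, s ≤ n → A.m (q s) = A.m (q 0)) :
    (∀ i, i ≤ n → A.nu (q i) = ((i : ℤ) + 1) * A.nu (q 0) - (i : ℤ)
        ∧ A.N (q i) = ((i : ℤ) + 1) * A.N (q 0))
    ∧ (∀ b : ℕ, 0 < b → (b : ℤ) ∣ A.N (q 0) → ∀ i, i ≤ n → (b : ℤ) ∣ A.N (q i))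
    ∧ (0 < n → ∀ c' d' : ℕ, 0 < c' → 0 < d' → Nat.Coprime c' d' →
        A.nu (q n) * (d' : ℤ) = (c' : ℤ) * A.N (q n) → ¬ ((d' : ℤ) ∣ A.N (q 0))) := by
  have hdata := nu_eq_and_N_eq_of_isChainAlong hc hchain hm
  refine ⟨hdata, fun b _ hb i hi => (hdata i hi).2 ▸ hb.mul_left _, ?_⟩
  rintro hn c' d' - hd' - hratio ⟨e, he⟩
  obtain ⟨hnu, hN⟩ := hdata n le_rfl
  have hnu' : A.nu (q n) = (c' : ℤ) * ((n : ℤ) + 1) * e := by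
    apply mul_right_cancel₀ (by exact_mod_cast hd'.ne' : (d' : ℤ) ≠ 0)
    rw [hratio, hN, he]
    ring
  have hdvd : ((n + 1 : ℕ) : ℤ) ∣ (n : ℤ) :=
    ⟨A.nu (q 0) - c' * e, by push_cast; linear_combination hnu - hnu'⟩
  exact absurd (Nat.le_of_dvd hn (Int.natCast_dvd_natCast.1 hdvd)) (by omega)

theorem stmt9 {r : ℕ} (A : ToricCluster r) (hA : A.Idealistic)
    (n : ℕ) (q : ℕ → Fin r) (c : Fin 3)
    (hc : c ∉ labelsUnder A.toToricConstellation (q 0))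
    (hchain : ∀ s, s < n →
      IsChild A.toToricConstellation (q (s + 1)) (q s)
      ∧ A.toToricConstellation.label (q (s + 1)) = c)
    (hm : ∀ s, s ≤ n → A.m (q s) = A.m (q 0)) :
    (∀ i, i ≤ n → A.nu (q i) = ((i : ℤ) + 1) * A.nu (q 0) - (i : ℤ)
        ∧ A.N (q i) = ((i : ℤ) + 1) * A.N (q 0))
    ∧ (∀ b : ℕ, 0 < b → (b : ℤ) ∣ A.N (q 0) → ∀ i, i ≤ n → (b : ℤ) ∣ A.N (q i))
    ∧ (0 < n → ∀ c' d' : ℕ, 0 < c' → 0 < d' → Nat.Coprime c' d' →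
        A.nu (q n) * (d' : ℤ) = (c' : ℤ) * A.N (q n) → ¬ ((d' : ℤ) ∣ A.N (q 0))) :=
  stmt9_general A n q c hc hchain hm
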